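/- arXiv:1907.03375 — 4 statements merged into one kernel-verified Lean document; each statement's English description precedes it below -/
import Mathlib

section
/- Let f(β) = √β·∫₀^{√β} e^{−t²/2} dt + e^{−β/2} for β > 0. Then f is differentiable on (0,∞) with f'(β) = (1/(2√β))·∫₀^{√β} e^{−t²/2} dt; f' is strictly decreasing on (0,∞); f'(β) → 1/2 as β → 0⁺ and f'(β) → 0 as β → ∞; f(β) → 1 as β → 0⁺ and f(β) → ∞ as β → ∞; f' > 0 so f is strictly increasing and concave; and for every α with 0 < α < 1/2 there is a unique β > 0 such that f'(β) = α. -/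
/-!
Write `G x = ∫₀ˣ e^{-t²/2} dt`. Then `f β = φ (√β)` with `φ x = x G x + e^{-x²/2}`, and `φ' = G`,
so `f' β = G (√β) / √β / 2`. Since `G' = e^{-x²/2}` is strictly decreasing on `[0, ∞)` and
`G 0 = 0`, the chord slope `G x / x` strictly decreases, from `G' 0 = 1` at `0⁺` to `0` at `∞`
(as `G → √(π/2)`). Everything else follows: `f` is strictly concave because `f'` strictly
decreases, and the intermediate value theorem plus injectivity solve `f' β = α`.
-/

open Filter

/-- `f(β) = √β·∫₀^{√β} e^{−t²/2} dt + e^{−β/2}`. -/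
noncomputable def fFun (β : ℝ) : ℝ :=
  Real.sqrt β * (∫ t in (0:ℝ)..Real.sqrt β, Real.exp (-t^2/2)) + Real.exp (-β/2)

/-- `f'(β) = (1/(2√β))·∫₀^{√β} e^{−t²/2} dt`. -/
noncomputable def fDeriv (β : ℝ) : ℝ :=
  (1/(2*Real.sqrt β)) * ∫ t in (0:ℝ)..Real.sqrt β, Real.exp (-t^2/2)

open Real Set Topology

theorem StrictConcaveOn.strictAntiOn_div_self {𝕜 : Type*} [Field 𝕜] [LinearOrder 𝕜]
    [IsStrictOrderedRing 𝕜] {g : 𝕜 → 𝕜} (hg : StrictConcaveOn 𝕜 (Ici 0) g) (h₀ : g 0 = 0) :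
    StrictAntiOn (fun x ↦ g x / x) (Ioi 0) := by
  intro x hx y hy hxy
  have := hg.secant_strict_mono self_mem_Ici (mem_Ici_of_Ioi hx) (mem_Ici_of_Ioi hy)
    (ne_of_gt hx) (ne_of_gt hy) hxy
  simpa only [h₀, sub_zero] using this

theorem HasDerivAt.tendsto_div_self_nhdsGT {g : ℝ → ℝ} {d : ℝ} (hg : HasDerivAt g d 0)
    (h₀ : g 0 = 0) : Tendsto (fun x ↦ g x / x) (𝓝[>] 0) (𝓝 d) := by
  simpa [h₀, div_eq_inv_mul] using hg.tendsto_slope_zero_right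

theorem StrictAntiOn.existsUnique_eq_of_tendsto {f : ℝ → ℝ} {a b α : ℝ}
    (hf : StrictAntiOn f (Ioi 0)) (hcont : ContinuousOn f (Ioi 0))
    (h₀ : Tendsto f (𝓝[>] 0) (𝓝 a)) (h_top : Tendsto f atTop (𝓝 b)) (hαa : α < a)
    (hbα : b < α) : ∃! β, 0 < β ∧ f β = α := by
  obtain ⟨x, hxα, hx⟩ := ((h₀.eventually (eventually_gt_nhds hαa)).and self_mem_nhdsWithin).exists
  obtain ⟨y, hyα, hxy⟩ :=
    ((h_top.eventually (eventually_lt_nhds hbα)).and (eventually_gt_atTop x)).exists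
  obtain ⟨β, hβ, rfl⟩ := intermediate_value_Ioo' hxy.le
    (hcont.mono fun t ht ↦ lt_of_lt_of_le (mem_Ioi.1 hx) ht.1) ⟨hyα, hxα⟩
  have hβ₀ : 0 < β := (mem_Ioi.1 hx).trans hβ.1
  exact ⟨β, ⟨hβ₀, rfl⟩, fun γ ⟨hγ, hfγ⟩ ↦ hf.injOn hγ hβ₀ hfγ⟩

noncomputable def gaussInt (x : ℝ) : ℝ := ∫ t in (0:ℝ)..x, exp (-t ^ 2 / 2)

theorem continuous_exp_neg_sq_div_two : Continuous fun t : ℝ ↦ exp (-t ^ 2 / 2) := by fun_prop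

theorem hasDerivAt_gaussInt (x : ℝ) : HasDerivAt gaussInt (exp (-x ^ 2 / 2)) x :=
  intervalIntegral.integral_hasDerivAt_right
    (continuous_exp_neg_sq_div_two.intervalIntegrable 0 x)
    (continuous_exp_neg_sq_div_two.stronglyMeasurableAtFilter _ _)
    continuous_exp_neg_sq_div_two.continuousAt

theorem deriv_gaussInt : deriv gaussInt = fun x ↦ exp (-x ^ 2 / 2) :=
  funext fun x ↦ (hasDerivAt_gaussInt x).deriv

@[fun_prop]
theorem continuous_gaussInt : Continuous gaussInt :=
  continuous_iff_continuousAt.2 fun x ↦ (hasDerivAt_gaussInt x).continuousAt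

theorem gaussInt_zero : gaussInt 0 = 0 := intervalIntegral.integral_same

theorem gaussInt_pos {x : ℝ} (hx : 0 < x) : 0 < gaussInt x :=
  intervalIntegral.intervalIntegral_pos_of_pos
    (continuous_exp_neg_sq_div_two.intervalIntegrable 0 x) (fun _ ↦ exp_pos _) hx

theorem strictConcaveOn_gaussInt : StrictConcaveOn ℝ (Ici 0) gaussInt := by
  refine StrictAntiOn.strictConcaveOn_of_deriv (convex_Ici 0) continuous_gaussInt.continuousOn ?_
  rw [interior_Ici, deriv_gaussInt]
  intro x hx y hy hxy
  have : -y ^ 2 / 2 < -x ^ 2 / 2 := by nlinarith [mem_Ioi.1 hx]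
  exact exp_lt_exp.2 this

theorem tendsto_gaussInt_atTop : Tendsto gaussInt atTop (𝓝 (√(π / 2))) := by
  have hcongr : (fun t : ℝ ↦ exp (-t ^ 2 / 2)) = fun t ↦ exp (-(1 / 2) * t ^ 2) := by
    ext t; ring_nf
  have hlim : √(π / (1 / 2)) / 2 = √(π / 2) := by
    rw [show π / (1 / 2) = 2 ^ 2 * (π / 2) by ring, sqrt_mul (by norm_num), sqrt_sq zero_le_two,
      mul_div_cancel_left₀ _ two_ne_zero]
  have := MeasureTheory.intervalIntegral_tendsto_integral_Ioi 0
    ((integrable_exp_neg_mul_sq (by norm_num : (0:ℝ) < 1 / 2)).integrableOn) tendsto_id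
  rw [integral_gaussian_Ioi, hlim, ← hcongr] at this
  exact this

theorem hasDerivAt_mul_gaussInt_add_exp (x : ℝ) :
    HasDerivAt (fun x ↦ x * gaussInt x + exp (-x ^ 2 / 2)) (gaussInt x) x := by
  have hq : HasDerivAt (fun x : ℝ ↦ -x ^ 2 / 2) (-x) x :=
    ((hasDerivAt_pow 2 x).fun_neg.div_const 2).congr_deriv (by ring)
  exact (((hasDerivAt_id' x).mul (hasDerivAt_gaussInt x)).add hq.exp).congr_deriv (by ring)

theorem fFun_eq_of_nonneg {β : ℝ} (hβ : 0 ≤ β) :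
    fFun β = √β * gaussInt √β + exp (-√β ^ 2 / 2) := by
  rw [sq_sqrt hβ]; rfl

theorem fDeriv_eq (β : ℝ) : fDeriv β = gaussInt √β / √β / 2 := by
  rw [fDeriv, gaussInt]; ring

theorem hasDerivAt_fFun {β : ℝ} (hβ : 0 < β) : HasDerivAt fFun (fDeriv β) β := by
  have := (hasDerivAt_mul_gaussInt_add_exp √β).comp β (hasDerivAt_sqrt hβ.ne')
  refine (this.congr_of_eventuallyEq ?_).congr_deriv ?_
  · filter_upwards [Ioi_mem_nhds hβ] with x hx using fFun_eq_of_nonneg (le_of_lt hx)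
  · rw [fDeriv_eq]; ring

theorem eqOn_deriv_fFun : EqOn (deriv fFun) fDeriv (Ioi 0) :=
  fun _ hβ ↦ (hasDerivAt_fFun hβ).deriv

theorem strictAntiOn_fDeriv : StrictAntiOn fDeriv (Ioi 0) := by
  intro x hx y hy hxy
  simp only [fDeriv_eq]
  gcongr ?_ / 2
  exact strictConcaveOn_gaussInt.strictAntiOn_div_self gaussInt_zero (sqrt_pos.2 hx)
    (sqrt_pos.2 hy) (sqrt_lt_sqrt (le_of_lt hx) hxy)

theorem tendsto_sqrt_nhdsGT_zero : Tendsto (√·) (𝓝[>] 0) (𝓝[>] 0) :=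
  tendsto_nhdsWithin_of_tendsto_nhds_of_eventually_within _
    (continuous_sqrt.tendsto' 0 0 sqrt_zero |>.mono_left nhdsWithin_le_nhds)
    (eventually_mem_nhdsWithin.mono fun _ hx ↦ sqrt_pos.2 hx)

theorem tendsto_fDeriv_nhdsGT_zero : Tendsto fDeriv (𝓝[>] 0) (𝓝 (1 / 2)) := by
  have h := ((hasDerivAt_gaussInt 0).tendsto_div_self_nhdsGT gaussInt_zero).comp
    tendsto_sqrt_nhdsGT_zero
  simpa using (h.div_const 2).congr fun β ↦ (fDeriv_eq β).symm

theorem tendsto_fDeriv_atTop : Tendsto fDeriv atTop (𝓝 0) := by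
  have h := (tendsto_gaussInt_atTop.mul tendsto_inv_atTop_zero).comp tendsto_sqrt_atTop
  simpa using (h.div_const 2).congr fun β ↦ by simp [fDeriv_eq, div_eq_mul_inv]

theorem fDeriv_pos {β : ℝ} (hβ : 0 < β) : 0 < fDeriv β := by
  have := sqrt_pos.2 hβ
  rw [fDeriv_eq]
  exact div_pos (div_pos (gaussInt_pos this) this) two_pos

theorem continuousOn_fDeriv : ContinuousOn fDeriv (Ioi 0) := by
  simp only [funext fDeriv_eq]
  exact ContinuousOn.div_const (continuous_gaussInt.comp continuous_sqrt |>.continuousOn.div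
    continuous_sqrt.continuousOn fun _ hx ↦ (sqrt_pos.2 hx).ne') 2

theorem continuous_fFun : Continuous fFun := by
  change Continuous fun β ↦ √β * gaussInt √β + exp (-β / 2)
  fun_prop

theorem tendsto_fFun_atTop : Tendsto fFun atTop atTop :=
  ((tendsto_sqrt_atTop.atTop_mul_pos (sqrt_pos.2 (by positivity))
    (tendsto_gaussInt_atTop.comp tendsto_sqrt_atTop)).atTop_add_nonneg fun _ ↦ (exp_pos _).le)

theorem tendsto_fFun_nhdsGT_zero : Tendsto fFun (𝓝[>] 0) (𝓝 1) := by
  have hf₀ : fFun 0 = 1 := by simp [fFun]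
  exact hf₀ ▸ continuous_fFun.continuousWithinAt

theorem strictMonoOn_fFun : StrictMonoOn fFun (Ioi 0) := by
  refine strictMonoOn_of_deriv_pos (convex_Ioi 0) continuous_fFun.continuousOn fun β hβ ↦ ?_
  rw [interior_Ioi] at hβ
  exact eqOn_deriv_fFun hβ ▸ fDeriv_pos hβ

theorem strictConcaveOn_fFun : StrictConcaveOn ℝ (Ioi 0) fFun := by
  refine StrictAntiOn.strictConcaveOn_of_deriv (convex_Ioi 0) continuous_fFun.continuousOn ?_
  rw [interior_Ioi]
  exact strictAntiOn_fDeriv.congr eqOn_deriv_fFun.symm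

theorem fFun_properties :
    (∀ β : ℝ, 0 < β → HasDerivAt fFun (fDeriv β) β) ∧
    StrictAntiOn fDeriv (Set.Ioi 0) ∧
    Tendsto fDeriv (nhdsWithin 0 (Set.Ioi 0)) (nhds (1/2)) ∧
    Tendsto fDeriv atTop (nhds 0) ∧
    Tendsto fFun (nhdsWithin 0 (Set.Ioi 0)) (nhds 1) ∧
    Tendsto fFun atTop atTop ∧
    (∀ β : ℝ, 0 < β → 0 < fDeriv β) ∧
    StrictMonoOn fFun (Set.Ioi 0) ∧
    ConcaveOn ℝ (Set.Ioi 0) fFun ∧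
    (∀ α : ℝ, 0 < α → α < 1/2 → ∃! β : ℝ, 0 < β ∧ fDeriv β = α) := by
  refine ⟨fun _ ↦ hasDerivAt_fFun, strictAntiOn_fDeriv, tendsto_fDeriv_nhdsGT_zero,
    tendsto_fDeriv_atTop, tendsto_fFun_nhdsGT_zero, tendsto_fFun_atTop, fun _ ↦ fDeriv_pos,
    strictMonoOn_fFun, strictConcaveOn_fFun.concaveOn, fun α hα₀ hα ↦ ?_⟩
  exact strictAntiOn_fDeriv.existsUnique_eq_of_tendsto continuousOn_fDeriv
    tendsto_fDeriv_nhdsGT_zero tendsto_fDeriv_atTop hα hα₀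
end

section
/- Let X₁,…,X_n, Y₁,…,Y_n be 2n independent random variables uniform on [0,1], and let λ = λ(n) satisfy n/log n ≤ λ ≤ n·log n. Then E[min_{1≤i≤n}(X_i + λY_i)] = (1+o(1))·(λ/n)·(√(n/λ)·∫₀^{√(n/λ)} e^{−t²/2} dt + e^{−n/(2λ)}) as n → ∞, uniformly over all such λ. -/
open MeasureTheory Filter

/-- The uniform probability measure on `[0,1]`. -/
noncomputable def unif01 : Measure ℝ := volume.restrict (Set.Icc (0:ℝ) 1)

/-- Product measure modelling `2n` i.i.d. uniform `[0,1]` variables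
`X_i = x (i, true)` and `Y_i = x (i, false)`. -/
noncomputable def pairMeasure (n : ℕ) : Measure (Fin n × Bool → ℝ) :=
  Measure.pi fun _ => unif01

/-- `E[min_{1 ≤ i ≤ n} (X_i + λ Y_i)]` for `X_i, Y_i` i.i.d. uniform on `[0,1]`. -/
noncomputable def Emin (n : ℕ) (lam : ℝ) : ℝ :=
  ∫ x, (⨅ i : Fin n, (x (i, true) + lam * x (i, false))) ∂(pairMeasure n)

/-!
Layer cake gives `E[min_i (X_i + λY_i)] = ∫₀^∞ S(t)ⁿ dt` with `S(t) = P(X + λY > t)`, which for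
`λ ≥ 1` is explicit: `1 - t²/2λ` on `[0,1]`, linear on `[1,λ]`, quadratic on `[λ, λ+1]`, zero
beyond. Put `a = n/2λ`. By `exp(-x - 2x²) ≤ 1 - x ≤ exp(-x)` the first piece is `∫₀¹ exp(-a s²) ds`
and the second `(λ/n) e^{-a}`, both up to factors `exp(O(1/λ + n/λ²))` and `1 + O(1/n)`, while the
third is at most `(2λ)⁻ⁿ ≤ 3⁻ⁿ e^{-a}`. The substitution `t = √(n/λ) s` turns the sum of the first
two into the normalising expression, and the error is `o(1)` as soon as `λ ≥ n / log n`.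
-/

open Set

instance : IsProbabilityMeasure unif01 :=
  ⟨by simp [unif01, Real.volume_Icc]⟩

instance (n : ℕ) : IsProbabilityMeasure (pairMeasure n) := by
  unfold pairMeasure; infer_instance

/-- `unifSurv c = P(U > c)` for `U` uniform on `[0,1]`. -/
noncomputable def unifSurv (c : ℝ) : ℝ := max 0 (min 1 (1 - c))

lemma unifSurv_nonneg (c : ℝ) : 0 ≤ unifSurv c := le_max_left _ _

lemma unifSurv_of_nonpos {c : ℝ} (h : c ≤ 0) : unifSurv c = 1 := by
  rw [unifSurv, min_eq_left (by linarith), max_eq_right zero_le_one]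

lemma unifSurv_of_mem {c : ℝ} (h0 : 0 ≤ c) (h1 : c ≤ 1) : unifSurv c = 1 - c := by
  rw [unifSurv, min_eq_right (by linarith), max_eq_right (by linarith)]

lemma unifSurv_of_one_le {c : ℝ} (h : 1 ≤ c) : unifSurv c = 0 := by
  rw [unifSurv, min_eq_right (by linarith), max_eq_left (by linarith)]

lemma antitone_unifSurv : Antitone unifSurv := fun _ _ hab => by
  unfold unifSurv; gcongr

lemma continuous_unifSurv : Continuous unifSurv := by
  unfold unifSurv; fun_prop

lemma unif01_Ioi (c : ℝ) : unif01 (Ioi c) = ENNReal.ofReal (unifSurv c) := by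
  rw [unif01, Measure.restrict_apply measurableSet_Ioi]
  rcases le_or_gt 0 c with hc | hc
  · have hIoc : Ioi c ∩ Icc 0 1 = Ioc c 1 := by
      ext x; simp only [mem_inter_iff, mem_Ioi, mem_Icc, mem_Ioc]; grind
    rw [hIoc, Real.volume_Ioc]
    rcases le_or_gt c 1 with hc1 | hc1
    · rw [unifSurv_of_mem hc hc1]
    · rw [unifSurv_of_one_le hc1.le, ENNReal.ofReal_eq_zero.mpr (by linarith),
        ENNReal.ofReal_zero]
  · rw [inter_eq_right.mpr ((Icc_subset_Ioi_iff zero_le_one).mpr hc), Real.volume_Icc,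
      unifSurv_of_nonpos hc.le]
    norm_num

/-- `sumSurv lam s = P(X + lam Y > s)` for independent `X, Y` uniform on `[0,1]`
(obtained by conditioning on `X`). -/
noncomputable def sumSurv (lam s : ℝ) : ℝ := ∫ x in (0:ℝ)..1, unifSurv ((s - x) / lam)

lemma sumSurv_nonneg (lam s : ℝ) : 0 ≤ sumSurv lam s :=
  intervalIntegral.integral_nonneg zero_le_one fun _ _ => unifSurv_nonneg _

lemma continuous_unifSurv_comp (lam s : ℝ) : Continuous fun x => unifSurv ((s - x) / lam) :=
  continuous_unifSurv.comp (by fun_prop)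

lemma antitone_sumSurv {lam : ℝ} (hlam : 0 < lam) : Antitone (sumSurv lam) := fun s s' hss =>
  intervalIntegral.integral_mono_on zero_le_one
    ((continuous_unifSurv_comp _ _).intervalIntegrable _ _)
    ((continuous_unifSurv_comp _ _).intervalIntegrable _ _)
    fun _ _ => antitone_unifSurv (by gcongr)

lemma unif01_prod_lt {lam : ℝ} (hlam : 0 < lam) (s : ℝ) :
    (unif01.prod unif01) {p : ℝ × ℝ | s < p.1 + lam * p.2} = ENNReal.ofReal (sumSurv lam s) := by
  have hslice : ∀ x : ℝ, Prod.mk x ⁻¹' {p : ℝ × ℝ | s < p.1 + lam * p.2} = Ioi ((s - x) / lam) := by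
    intro x; ext y
    simp only [mem_preimage, mem_ofPred_eq, mem_Ioi, div_lt_iff₀ hlam]
    constructor <;> intro h <;> linarith
  rw [Measure.prod_apply (measurableSet_lt measurable_const (by fun_prop))]
  simp_rw [hslice, unif01_Ioi]
  rw [sumSurv, intervalIntegral.integral_of_le zero_le_one, ← integral_Icc_eq_integral_Ioc,
    ofReal_integral_eq_lintegral_ofReal _ (.of_forall fun _ => unifSurv_nonneg _)]
  · rfl
  · exact (continuous_unifSurv_comp _ _).integrableOn_Icc

lemma integral_unifSurv_of_linear {lam s a b : ℝ} (hlam : 0 < lam) (hab : a ≤ b)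
    (ha : s - lam ≤ a) (hb : b ≤ s) :
    ∫ x in a..b, unifSurv ((s - x) / lam)
      = (b - a) * (1 - s / lam) + (b ^ 2 - a ^ 2) / (2 * lam) := by
  have hlin : EqOn (fun x => unifSurv ((s - x) / lam)) (fun x => (1 - s / lam) + x / lam)
      (uIcc a b) := by
    intro x hx
    rw [uIcc_of_le hab] at hx
    beta_reduce
    rw [unifSurv_of_mem (div_nonneg (by linarith [hx.2]) hlam.le)
      ((div_le_one hlam).mpr (by linarith [hx.1]))]
    ring
  rw [intervalIntegral.integral_congr hlin, intervalIntegral.integral_add intervalIntegrable_const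
    ((by fun_prop : Continuous fun x : ℝ => x / lam).intervalIntegrable a b),
    intervalIntegral.integral_const, intervalIntegral.integral_div,
    integral_id, smul_eq_mul]
  field_simp

lemma sumSurv_of_le_one {lam s : ℝ} (hlam : 1 ≤ lam) (h0 : 0 ≤ s) (h1 : s ≤ 1) :
    sumSurv lam s = 1 - s ^ 2 / (2 * lam) := by
  have hlam0 : 0 < lam := by linarith
  have hconst : ∫ x in s..1, unifSurv ((s - x) / lam) = ∫ _ in s..1, (1 : ℝ) :=
    intervalIntegral.integral_congr fun x hx => unifSurv_of_nonpos
      (div_nonpos_of_nonpos_of_nonneg (by linarith [(uIcc_of_le h1 ▸ hx).1]) hlam0.le)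
  rw [sumSurv, ← intervalIntegral.integral_add_adjacent_intervals
      ((continuous_unifSurv_comp _ _).intervalIntegrable 0 s)
      ((continuous_unifSurv_comp _ _).intervalIntegrable s 1),
    integral_unifSurv_of_linear hlam0 h0 (by linarith) le_rfl, hconst,
    intervalIntegral.integral_const, smul_eq_mul]
  field_simp
  ring

lemma sumSurv_of_one_le_of_le {lam s : ℝ} (h1 : 1 ≤ s) (h2 : s ≤ lam) :
    sumSurv lam s = 1 - (2 * s - 1) / (2 * lam) := by
  have hlam0 : 0 < lam := by linarith
  rw [sumSurv, integral_unifSurv_of_linear hlam0 zero_le_one (by linarith) h1]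
  field_simp
  ring

lemma sumSurv_of_le_of_le_add_one {lam s : ℝ} (hlam : 1 ≤ lam) (h1 : lam ≤ s)
    (h2 : s ≤ lam + 1) : sumSurv lam s = (lam + 1 - s) ^ 2 / (2 * lam) := by
  have hlam0 : 0 < lam := by linarith
  have hzero : ∫ x in (0:ℝ)..(s - lam), unifSurv ((s - x) / lam)
      = ∫ _ in (0:ℝ)..(s - lam), (0 : ℝ) :=
    intervalIntegral.integral_congr fun x hx => unifSurv_of_one_le
      ((le_div_iff₀ hlam0).mpr (by linarith [(uIcc_of_le (by linarith : 0 ≤ s - lam) ▸ hx).2]))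
  rw [sumSurv, ← intervalIntegral.integral_add_adjacent_intervals
      ((continuous_unifSurv_comp _ _).intervalIntegrable 0 (s - lam))
      ((continuous_unifSurv_comp _ _).intervalIntegrable (s - lam) 1),
    hzero, intervalIntegral.integral_zero,
    integral_unifSurv_of_linear hlam0 (by linarith) le_rfl (by linarith)]
  field_simp
  ring

lemma sumSurv_of_add_one_le {lam s : ℝ} (hlam : 0 < lam) (h : lam + 1 ≤ s) : sumSurv lam s = 0 := by
  rw [sumSurv, intervalIntegral.integral_congr (g := fun _ => 0), intervalIntegral.integral_zero]
  intro x hx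
  rw [uIcc_of_le zero_le_one] at hx
  exact unifSurv_of_one_le ((le_div_iff₀ hlam).mpr (by linarith [hx.2]))

lemma measurePreserving_pairs {ι α : Type*} [Fintype ι] [MeasurableSpace α] (μ : Measure α)
    [SigmaFinite μ] :
    MeasurePreserving (fun (x : ι × Bool → α) (i : ι) => (x (i, true), x (i, false)))
      (Measure.pi fun _ => μ) (Measure.pi fun _ => μ.prod μ) := by
  classical
  let p : ι × Bool → Prop := fun q => q.2 = true
  let ea : ι ≃ {q : ι × Bool // p q} :=
    ⟨fun i => ⟨(i, true), rfl⟩, fun q => q.1.1, fun _ => rfl,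
      fun q => Subtype.ext (Prod.ext rfl q.2.symm)⟩
  let eb : ι ≃ {q : ι × Bool // ¬ p q} :=
    ⟨fun i => ⟨(i, false), by simp [p]⟩, fun q => q.1.1, fun _ => rfl,
      fun ⟨⟨_, b⟩, hb⟩ => by simp only [p, Bool.not_eq_true] at hb; simp [hb]⟩
  have hsplit := measurePreserving_piEquivPiSubtypeProd (fun _ : ι × Bool => μ) p
  have hfst := (measurePreserving_piCongrLeft (fun _ : {q // p q} => μ) ea).symm
    (MeasurableEquiv.piCongrLeft (fun _ => α) ea)
  have hsnd := (measurePreserving_piCongrLeft (fun _ : {q // ¬ p q} => μ) eb).symm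
    (MeasurableEquiv.piCongrLeft (fun _ => α) eb)
  have hzip := (measurePreserving_arrowProdEquivProdArrow α α ι (fun _ => μ) (fun _ => μ)).symm
    (MeasurableEquiv.arrowProdEquivProdArrow α α ι)
  exact (hzip.comp (hfst.prod hsnd)).comp hsplit

lemma lt_ciInf_iff_of_finite {ι α : Type*} [Finite ι] [Nonempty ι]
    [ConditionallyCompleteLinearOrder α] {f : ι → α} {t : α} :
    t < ⨅ i, f i ↔ ∀ i, t < f i := by
  refine ⟨fun h i => h.trans_le (ciInf_le (Finite.bddBelow_range f) i), fun h => ?_⟩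
  obtain ⟨i, hi⟩ := exists_eq_ciInf_of_finite (f := f)
  exact hi ▸ h i

lemma pairMeasure_lt_iInf (n : ℕ) [NeZero n] (lam t : ℝ) :
    pairMeasure n {x | t < ⨅ i : Fin n, (x (i, true) + lam * x (i, false))}
      = (unif01.prod unif01) {p : ℝ × ℝ | t < p.1 + lam * p.2} ^ n := by
  have hT : MeasurableSet {p : ℝ × ℝ | t < p.1 + lam * p.2} :=
    measurableSet_lt measurable_const (by fun_prop)
  have hset : {x : Fin n × Bool → ℝ | t < ⨅ i : Fin n, (x (i, true) + lam * x (i, false))}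
      = (fun x i => (x (i, true), x (i, false))) ⁻¹'
          univ.pi fun _ => {p | t < p.1 + lam * p.2} := by
    ext x
    simp [lt_ciInf_iff_of_finite]
  rw [hset, pairMeasure, (measurePreserving_pairs unif01).measure_preimage
    (MeasurableSet.univ_pi fun _ => hT).nullMeasurableSet, Measure.pi_pi]
  simp

lemma ae_mem_Icc_pairMeasure (n : ℕ) :
    ∀ᵐ x ∂(pairMeasure n), ∀ q, x q ∈ Icc (0:ℝ) 1 :=
  ae_all_iff.mpr fun q =>
    (measurePreserving_eval _ q).quasiMeasurePreserving.ae (ae_restrict_mem measurableSet_Icc)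

lemma Emin_eq_integral_sumSurv_pow (n : ℕ) [NeZero n] {lam : ℝ} (hlam : 0 < lam) :
    Emin n lam = ∫ t in Ioi (0:ℝ), sumSurv lam t ^ n := by
  set f : (Fin n × Bool → ℝ) → ℝ := fun x => ⨅ i : Fin n, (x (i, true) + lam * x (i, false))
  have hmem : ∀ᵐ x ∂(pairMeasure n), 0 ≤ f x ∧ f x ≤ 1 + lam := by
    filter_upwards [ae_mem_Icc_pairMeasure n] with x hx
    have hX := fun i => hx (i, true)
    have hY := fun i => hx (i, false)
    refine ⟨le_ciInf fun i => ?_, ciInf_le_of_le (Finite.bddBelow_range _) 0 ?_⟩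
    · nlinarith [(hX i).1, (hY i).1]
    · nlinarith [(hX 0).2, (hY 0).1, (hY 0).2]
  have hint : Integrable f (pairMeasure n) :=
    (integrable_const (1 + lam)).mono'
      (Measurable.iInf fun _ => by fun_prop).aestronglyMeasurable
      (hmem.mono fun x hx => by rw [Real.norm_of_nonneg hx.1]; exact hx.2)
  rw [Emin, hint.integral_eq_integral_meas_lt (hmem.mono fun _ hx => hx.1)]
  refine setIntegral_congr_fun measurableSet_Ioi fun t _ => ?_
  simp only [f, measureReal_def, pairMeasure_lt_iInf, unif01_prod_lt hlam, ENNReal.toReal_pow,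
    ENNReal.toReal_ofReal (sumSurv_nonneg lam t)]

lemma integral_sumSurv_pow_Ioi (n : ℕ) [NeZero n] {lam : ℝ} (hlam : 1 ≤ lam) :
    ∫ t in Ioi (0:ℝ), sumSurv lam t ^ n
      = (∫ s in (0:ℝ)..1, (1 - s ^ 2 / (2 * lam)) ^ n)
        + (∫ s in (1:ℝ)..lam, (1 - (2 * s - 1) / (2 * lam)) ^ n)
        + ∫ s in lam..(lam + 1), ((lam + 1 - s) ^ 2 / (2 * lam)) ^ n := by
  have hlam0 : 0 < lam := by linarith
  have hanti : Antitone fun s => sumSurv lam s ^ n := fun _ _ hst =>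
    pow_le_pow_left₀ (sumSurv_nonneg _ _) (antitone_sumSurv hlam0 hst) n
  have hint : ∀ a b, IntervalIntegrable (fun s => sumSurv lam s ^ n) volume a b := fun _ _ =>
    (hanti.antitoneOn _).intervalIntegrable
  have hvanish : ∀ t ∈ Ioi (0:ℝ) \ Ioc 0 (lam + 1), sumSurv lam t ^ n = 0 := fun t ht => by
    have : lam + 1 ≤ t := by
      by_contra! h; exact ht.2 ⟨ht.1, h.le⟩
    rw [sumSurv_of_add_one_le hlam0 this, zero_pow (NeZero.ne n)]
  have piece : ∀ {a b : ℝ} {g : ℝ → ℝ}, a ≤ b → (∀ s, a ≤ s → s ≤ b → sumSurv lam s = g s) →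
      ∫ s in a..b, sumSurv lam s ^ n = ∫ s in a..b, g s ^ n := fun hab hg =>
    intervalIntegral.integral_congr fun s hs => by
      rw [uIcc_of_le hab] at hs; simp only [hg s hs.1 hs.2]
  rw [setIntegral_eq_of_subset_of_forall_sdiff_eq_zero measurableSet_Ioi Ioc_subset_Ioi_self
      hvanish,
    ← intervalIntegral.integral_of_le (by linarith),
    ← intervalIntegral.integral_add_adjacent_intervals (hint 0 1) (hint 1 (lam + 1)),
    ← intervalIntegral.integral_add_adjacent_intervals (hint 1 lam) (hint lam (lam + 1)),
    piece zero_le_one fun s h0 h1 => sumSurv_of_le_one hlam h0 h1,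
    piece hlam fun s h1 h2 => sumSurv_of_one_le_of_le h1 h2,
    piece (by linarith) fun s h1 h2 => sumSurv_of_le_of_le_add_one hlam h1 h2, add_assoc]

lemma integral_one_sub_linear_pow (n : ℕ) {lam : ℝ} (hlam : 0 < lam) :
    ∫ s in (1:ℝ)..lam, (1 - (2 * s - 1) / (2 * lam)) ^ n
      = lam / (n + 1) * ((1 - 1 / (2 * lam)) ^ (n + 1) - (1 / (2 * lam)) ^ (n + 1)) := by
  have hfun : (fun s : ℝ => (1 - (2 * s - 1) / (2 * lam)) ^ n)
      = fun s => (1 + 1 / (2 * lam) - lam⁻¹ * s) ^ n := by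
    ext s; congr 1; field_simp; ring
  rw [hfun, intervalIntegral.integral_comp_sub_mul (fun x : ℝ => x ^ n) (inv_ne_zero hlam.ne'),
    integral_pow, smul_eq_mul, inv_inv]
  have e1 : 1 + 1 / (2 * lam) - lam⁻¹ * lam = 1 / (2 * lam) := by field_simp; ring
  have e2 : 1 + 1 / (2 * lam) - lam⁻¹ * 1 = 1 - 1 / (2 * lam) := by field_simp; ring
  rw [e1, e2]
  ring

lemma Emin_eq (n : ℕ) [NeZero n] {lam : ℝ} (hlam : 1 ≤ lam) :
    Emin n lam = (∫ s in (0:ℝ)..1, (1 - s ^ 2 / (2 * lam)) ^ n)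
      + lam / (n + 1) * ((1 - 1 / (2 * lam)) ^ (n + 1) - (1 / (2 * lam)) ^ (n + 1))
      + ∫ s in lam..(lam + 1), ((lam + 1 - s) ^ 2 / (2 * lam)) ^ n := by
  rw [Emin_eq_integral_sumSurv_pow n (by linarith), integral_sumSurv_pow_Ioi n hlam,
    integral_one_sub_linear_pow n (by linarith)]

lemma one_sub_pow_le_exp_neg_mul (n : ℕ) {x : ℝ} (hx : x ≤ 1) :
    (1 - x) ^ n ≤ Real.exp (-(n * x)) := by
  rw [show -(n * x) = n * -x by ring, Real.exp_nat_mul]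
  exact pow_le_pow_left₀ (by linarith) (Real.one_sub_le_exp_neg x) n

lemma exp_neg_mul_le_one_sub_pow (n : ℕ) {x : ℝ} (h1 : x ≤ 1 / 2) :
    Real.exp (-(n * (x + 2 * x ^ 2))) ≤ (1 - x) ^ n := by
  have hx : 0 < 1 - x := by linarith
  -- `log (1 - x) ≥ -x / (1 - x) ≥ -(x + 2 x²)` for `x ≤ 1/2`
  have hlog : -(x + 2 * x ^ 2) ≤ Real.log (1 - x) := by
    refine le_trans ?_ (Real.one_sub_inv_le_log_of_pos hx)
    rw [← sub_nonneg]
    have : 1 - (1 - x)⁻¹ - -(x + 2 * x ^ 2) = x ^ 2 * (1 - 2 * x) / (1 - x) := by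
      field_simp; ring
    rw [this]; have : 0 ≤ 1 - 2 * x := by linarith
    positivity
  rw [show -(n * (x + 2 * x ^ 2)) = n * -(x + 2 * x ^ 2) by ring, Real.exp_nat_mul]
  exact pow_le_pow_left₀ (Real.exp_nonneg _)
    ((Real.exp_le_exp.mpr hlog).trans_eq (Real.exp_log hx)) n

lemma pow_le_exp_neg_mul (n : ℕ) {y : ℝ} (h0 : 0 ≤ y) (h1 : y ≤ 1 / 4) :
    y ^ n ≤ (1 / 3) ^ n * Real.exp (-(n * y)) := by
  have hy : y ≤ 1 / 3 * Real.exp (-y) := by linarith [Real.one_sub_le_exp_neg y]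
  rw [show -(n * y) = n * -y by ring, Real.exp_nat_mul, ← mul_pow]
  exact pow_le_pow_left₀ h0 hy n

noncomputable def truncGauss (a : ℝ) : ℝ := ∫ s in (0:ℝ)..1, Real.exp (-(a * s ^ 2))

lemma integral_exp_neg_sq_div_two (c : ℝ) :
    ∫ t in (0:ℝ)..c, Real.exp (-t ^ 2 / 2) = c * truncGauss (c ^ 2 / 2) := by
  have h := intervalIntegral.smul_integral_comp_mul_left (fun t => Real.exp (-t ^ 2 / 2)) c
    (a := 0) (b := 1)
  rw [mul_zero, mul_one, smul_eq_mul] at h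
  rw [← h, truncGauss]
  congr 1
  refine intervalIntegral.integral_congr fun s _ => ?_
  ring_nf

lemma exp_neg_le_truncGauss {a : ℝ} (ha : 0 ≤ a) : Real.exp (-a) ≤ truncGauss a := by
  have h := intervalIntegral.integral_mono_on (μ := volume) zero_le_one intervalIntegrable_const
    ((by fun_prop : Continuous fun s : ℝ => Real.exp (-(a * s ^ 2))).intervalIntegrable 0 1)
    fun s hs => Real.exp_le_exp.mpr <| neg_le_neg <|
      mul_le_of_le_one_right ha (pow_le_one₀ hs.1 hs.2)
  simpa [truncGauss] using h

section Pieces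

variable (n : ℕ) {lam : ℝ}

lemma integral_one_sub_sq_pow_le (hlam : 1 ≤ lam) :
    ∫ s in (0:ℝ)..1, (1 - s ^ 2 / (2 * lam)) ^ n ≤ truncGauss (n / (2 * lam)) := by
  refine intervalIntegral.integral_mono_on zero_le_one
    (Continuous.intervalIntegrable (by fun_prop) _ _)
    (Continuous.intervalIntegrable (by fun_prop) _ _) fun s hs => ?_
  have hx : s ^ 2 / (2 * lam) ≤ 1 := by
    rw [div_le_one (by positivity)]; nlinarith [pow_le_one₀ hs.1 hs.2 (n := 2)]
  refine (one_sub_pow_le_exp_neg_mul n hx).trans_eq ?_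
  congr 1; ring

lemma exp_mul_truncGauss_le_integral (hlam : 1 ≤ lam) :
    Real.exp (-(n / (2 * lam ^ 2))) * truncGauss (n / (2 * lam))
      ≤ ∫ s in (0:ℝ)..1, (1 - s ^ 2 / (2 * lam)) ^ n := by
  have hlam0 : 0 < lam := by linarith
  rw [truncGauss, ← intervalIntegral.integral_const_mul]
  refine intervalIntegral.integral_mono_on zero_le_one
    (Continuous.intervalIntegrable (by fun_prop) _ _)
    (Continuous.intervalIntegrable (by fun_prop) _ _) fun s hs => ?_
  have hs2 : s ^ 2 ≤ 1 := pow_le_one₀ hs.1 hs.2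
  have hx : s ^ 2 / (2 * lam) ≤ 1 / 2 := by
    rw [div_le_div_iff₀ (by positivity) two_pos]; nlinarith
  refine le_trans ?_ (exp_neg_mul_le_one_sub_pow n hx)
  rw [← Real.exp_add, Real.exp_le_exp]
  have herr : n * (2 * (s ^ 2 / (2 * lam)) ^ 2) ≤ n / (2 * lam ^ 2) := by
    rw [show n * (2 * (s ^ 2 / (2 * lam)) ^ 2) = n / (2 * lam ^ 2) * (s ^ 2) ^ 2 by
      field_simp]
    exact mul_le_of_le_one_right (by positivity) (pow_le_one₀ (sq_nonneg s) hs2)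
  have : (n : ℝ) * (s ^ 2 / (2 * lam)) = n / (2 * lam) * s ^ 2 := by ring
  linarith

lemma linear_piece_le (hn : n ≠ 0) (hlam : 1 ≤ lam) :
    lam / (n + 1) * ((1 - 1 / (2 * lam)) ^ (n + 1) - (1 / (2 * lam)) ^ (n + 1))
      ≤ lam / n * Real.exp (-(n / (2 * lam))) := by
  have hlam0 : 0 < lam := by linarith
  have hy : 1 / (2 * lam) ≤ 1 := by rw [div_le_one (by positivity)]; linarith
  have hpow : (1 - 1 / (2 * lam)) ^ (n + 1) ≤ Real.exp (-(n / (2 * lam))) := by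
    refine (one_sub_pow_le_exp_neg_mul (n + 1) hy).trans (Real.exp_le_exp.mpr ?_)
    rw [neg_le_neg_iff, Nat.cast_succ, add_mul, mul_one_div]
    linarith [one_div_pos.mpr (by positivity : 0 < 2 * lam)]
  have hcoef : lam / (n + 1) ≤ lam / n :=
    div_le_div_of_nonneg_left hlam0.le (by positivity) (by linarith)
  calc lam / (n + 1) * ((1 - 1 / (2 * lam)) ^ (n + 1) - (1 / (2 * lam)) ^ (n + 1))
      ≤ lam / (n + 1) * Real.exp (-(n / (2 * lam))) := by
        gcongr
        linarith [pow_nonneg (one_div_nonneg.mpr (by positivity : 0 ≤ 2 * lam)) (n + 1)]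
    _ ≤ lam / n * Real.exp (-(n / (2 * lam))) := by gcongr

lemma le_linear_piece (hlam : 2 ≤ lam) :
    lam / (n + 1) * Real.exp (-(n / (2 * lam)))
        * (Real.exp (-(1 / (2 * lam) + (n + 1) / (2 * lam ^ 2))) - (1 / 3) ^ n)
      ≤ lam / (n + 1) * ((1 - 1 / (2 * lam)) ^ (n + 1) - (1 / (2 * lam)) ^ (n + 1)) := by
  have hlam0 : 0 < lam := by linarith
  set y := 1 / (2 * lam) with hy
  have hy0 : 0 ≤ y := by positivity
  have hy4 : y ≤ 1 / 4 := by rw [hy, div_le_div_iff₀ (by positivity) (by norm_num)]; linarith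
  have hmain : Real.exp (-(n / (2 * lam))) * Real.exp (-(1 / (2 * lam) + (n + 1) / (2 * lam ^ 2)))
      ≤ (1 - y) ^ (n + 1) := by
    refine le_trans (le_of_eq ?_) (exp_neg_mul_le_one_sub_pow (n + 1) (by linarith))
    rw [← Real.exp_add, hy]; congr 1; push_cast; field_simp; ring
  have htail : y ^ (n + 1) ≤ (1 / 3) ^ n * Real.exp (-(n / (2 * lam))) := by
    refine (pow_le_pow_of_le_one hy0 (by linarith) n.le_succ).trans ?_
    refine (pow_le_exp_neg_mul n hy0 hy4).trans_eq ?_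
    rw [hy, mul_one_div]
  rw [mul_assoc]
  gcongr
  nlinarith

lemma integral_sq_pow_nonneg (hlam : 0 < lam) :
    0 ≤ ∫ s in lam..(lam + 1), ((lam + 1 - s) ^ 2 / (2 * lam)) ^ n :=
  intervalIntegral.integral_nonneg (by linarith) fun _ _ => by positivity

lemma integral_sq_pow_le (hlam : 0 < lam) :
    ∫ s in lam..(lam + 1), ((lam + 1 - s) ^ 2 / (2 * lam)) ^ n ≤ (1 / (2 * lam)) ^ n := by
  have h := intervalIntegral.integral_mono_on (μ := volume) (by linarith : lam ≤ lam + 1)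
    ((by fun_prop : Continuous fun s => ((lam + 1 - s) ^ 2 / (2 * lam)) ^ n).intervalIntegrable _ _)
    intervalIntegrable_const fun s hs => by
      have : (lam + 1 - s) ^ 2 ≤ 1 := by nlinarith [hs.1, hs.2]
      show ((lam + 1 - s) ^ 2 / (2 * lam)) ^ n ≤ (1 / (2 * lam)) ^ n
      gcongr
  simpa using h

end Pieces

/-- The normalising expression of the theorem, after the substitution `t = √(n/λ) s`. -/
noncomputable def EminApprox (n : ℕ) (lam : ℝ) : ℝ :=
  truncGauss (n / (2 * lam)) + lam / n * Real.exp (-(n / (2 * lam)))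

lemma EminApprox_pos (n : ℕ) {lam : ℝ} (hlam : 0 ≤ lam) : 0 < EminApprox n lam :=
  add_pos_of_pos_of_nonneg ((Real.exp_pos _).trans_le (exp_neg_le_truncGauss (by positivity)))
    (by positivity)

lemma EminApprox_eq {n : ℕ} (hn : n ≠ 0) {lam : ℝ} (hlam : 0 < lam) :
    lam / n * (Real.sqrt (n / lam) * (∫ t in (0:ℝ)..Real.sqrt (n / lam), Real.exp (-t ^ 2 / 2))
        + Real.exp (-(n / (2 * lam)))) = EminApprox n lam := by
  have hn0 : (0 : ℝ) < n := by positivity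
  rw [EminApprox, integral_exp_neg_sq_div_two, ← mul_assoc, Real.mul_self_sqrt (by positivity),
    Real.sq_sqrt (by positivity)]
  field_simp

lemma Emin_le {n : ℕ} (hn : n ≠ 0) {lam : ℝ} (hlam : 2 ≤ lam) :
    Emin n lam ≤ (1 + (1 / 3) ^ n) * EminApprox n lam := by
  have : NeZero n := ⟨hn⟩
  have hlam1 : 1 ≤ lam := by linarith
  have hlam0 : 0 < lam := by linarith
  have hy4 : 1 / (2 * lam) ≤ 1 / 4 := by
    rw [div_le_div_iff₀ (by positivity) (by norm_num)]; linarith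
  have hcorner : (1 / (2 * lam)) ^ n ≤ (1 / 3) ^ n * truncGauss (n / (2 * lam)) := by
    refine (pow_le_exp_neg_mul n (by positivity) hy4).trans ?_
    rw [mul_one_div]
    gcongr
    exact exp_neg_le_truncGauss (by positivity)
  have hE : 0 ≤ (1 / 3 : ℝ) ^ n * (lam / n * Real.exp (-(n / (2 * lam)))) := by positivity
  rw [Emin_eq n hlam1, EminApprox]
  linarith [integral_one_sub_sq_pow_le n hlam1, linear_piece_le n hn hlam1,
    integral_sq_pow_le n hlam0]

lemma le_Emin {n : ℕ} (hn : n ≠ 0) {lam : ℝ} (hlam : 2 ≤ lam) :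
    n / (n + 1) * (Real.exp (-(1 / (2 * lam) + (n + 1) / (2 * lam ^ 2))) - (1 / 3) ^ n)
      * EminApprox n lam ≤ Emin n lam := by
  have : NeZero n := ⟨hn⟩
  have hlam0 : 0 < lam := by linarith
  set c := Real.exp (-(1 / (2 * lam) + (n + 1) / (2 * lam ^ 2))) - (1 / 3) ^ n
  have ht0 : (0 : ℝ) ≤ n / (n + 1) := by positivity
  have ht1 : (n : ℝ) / (n + 1) ≤ 1 := (div_le_one (by positivity)).mpr (by linarith)
  have hcoef : n / (n + 1) * c ≤ Real.exp (-(n / (2 * lam ^ 2))) := by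
    have hexp : Real.exp (-(1 / (2 * lam) + (n + 1) / (2 * lam ^ 2)))
        ≤ Real.exp (-(n / (2 * lam ^ 2))) := by
      have : 0 ≤ 1 / (2 * lam) + 1 / (2 * lam ^ 2) := by positivity
      gcongr
      rw [add_div]
      linarith
    nlinarith [mul_le_mul_of_nonneg_right ht1 (Real.exp_nonneg
      (-(1 / (2 * lam) + (n + 1) / (2 * lam ^ 2)))),
      mul_nonneg ht0 (by positivity : (0:ℝ) ≤ (1 / 3) ^ n)]
  have hK : n / (n + 1) * c * truncGauss (n / (2 * lam))
      ≤ ∫ s in (0:ℝ)..1, (1 - s ^ 2 / (2 * lam)) ^ n :=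
    (mul_le_mul_of_nonneg_right hcoef
      ((Real.exp_nonneg _).trans (exp_neg_le_truncGauss (by positivity)))).trans
      (exp_mul_truncGauss_le_integral n (by linarith))
  have hL : n / (n + 1) * c * (lam / n * Real.exp (-(n / (2 * lam))))
      = lam / (n + 1) * Real.exp (-(n / (2 * lam))) * c := by
    field_simp
  rw [Emin_eq n (by linarith), EminApprox]
  linarith [le_linear_piece n hlam, integral_sq_pow_nonneg n hlam0]

lemma tendsto_log_pow_div_natCast (k : ℕ) :
    Tendsto (fun n : ℕ => Real.log n ^ k / n) atTop (nhds 0) := by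
  simpa [Function.comp_def] using
    (Real.tendsto_pow_log_div_mul_add_atTop 1 0 k one_ne_zero).comp tendsto_natCast_atTop_atTop

section LogBound

variable {lam : ℕ → ℝ}

lemma eventually_inv_mem_Ioc_of_div_log_le
    (h : ∀ᶠ n : ℕ in atTop, (n : ℝ) / Real.log n ≤ lam n) :
    ∀ᶠ n : ℕ in atTop, 0 < (lam n)⁻¹ ∧ (lam n)⁻¹ ≤ Real.log n / n := by
  filter_upwards [h, eventually_ge_atTop 2] with n hn h2
  have hpos : 0 < (n : ℝ) / Real.log n :=
    div_pos (by positivity) (Real.log_pos (by exact_mod_cast h2))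
  exact ⟨inv_pos.mpr (hpos.trans_le hn), (inv_anti₀ hpos hn).trans_eq (inv_div _ _)⟩

lemma tendsto_inv_of_div_log_le (h : ∀ᶠ n : ℕ in atTop, (n : ℝ) / Real.log n ≤ lam n) :
    Tendsto (fun n => (lam n)⁻¹) atTop (nhds 0) :=
  tendsto_of_tendsto_of_tendsto_of_le_of_le' tendsto_const_nhds
    (by simpa using tendsto_log_pow_div_natCast 1)
    ((eventually_inv_mem_Ioc_of_div_log_le h).mono fun _ hn => hn.1.le)
    ((eventually_inv_mem_Ioc_of_div_log_le h).mono fun _ hn => hn.2)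

lemma tendsto_succ_div_sq_of_div_log_le
    (h : ∀ᶠ n : ℕ in atTop, (n : ℝ) / Real.log n ≤ lam n) :
    Tendsto (fun n : ℕ => (n + 1) / lam n ^ 2) atTop (nhds 0) := by
  refine tendsto_of_tendsto_of_tendsto_of_le_of_le' tendsto_const_nhds
    (by simpa using (tendsto_log_pow_div_natCast 2).const_mul 2)
    (Eventually.of_forall fun n => by positivity) ?_
  filter_upwards [eventually_inv_mem_Ioc_of_div_log_le h, eventually_ge_atTop 1] with n hn h1
  have hn1 : (1 : ℝ) ≤ n := by exact_mod_cast h1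
  calc ((n : ℝ) + 1) / lam n ^ 2 = (n + 1) * ((lam n)⁻¹) ^ 2 := by ring
    _ ≤ (n + 1) * (Real.log n / n) ^ 2 := by gcongr; exact hn.1.le; exact hn.2
    _ ≤ 2 * (Real.log n ^ 2 / n) := by
      rw [div_pow, ← sub_nonneg]
      have : 2 * (Real.log n ^ 2 / n) - (n + 1) * (Real.log n ^ 2 / n ^ 2)
          = (n - 1) * Real.log n ^ 2 / n ^ 2 := by field_simp; ring
      rw [this]
      have : (0 : ℝ) ≤ n - 1 := by linarith
      positivity

lemma eventually_two_le_of_div_log_le (h : ∀ᶠ n : ℕ in atTop, (n : ℝ) / Real.log n ≤ lam n) :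
    ∀ᶠ n in atTop, 2 ≤ lam n := by
  filter_upwards [eventually_inv_mem_Ioc_of_div_log_le h,
    (tendsto_inv_of_div_log_le h).eventually (gt_mem_nhds (by norm_num : (0 : ℝ) < 1 / 2))]
    with n hpos hhalf
  have hl : 0 < lam n := inv_pos.mp hpos.1
  have := mul_lt_mul_of_pos_right hhalf hl
  rw [inv_mul_cancel₀ hl.ne'] at this
  linarith

lemma tendsto_lower_factor_of_div_log_le
    (h : ∀ᶠ n : ℕ in atTop, (n : ℝ) / Real.log n ≤ lam n) :
    Tendsto (fun n : ℕ => n / (n + 1) *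
      (Real.exp (-(1 / (2 * lam n) + (n + 1) / (2 * lam n ^ 2))) - (1 / 3) ^ n))
      atTop (nhds 1) := by
  have herr : Tendsto (fun n : ℕ => -(1 / (2 * lam n) + (n + 1) / (2 * lam n ^ 2)))
      atTop (nhds 0) := by
    have := (((tendsto_inv_of_div_log_le h).div_const 2).add
      ((tendsto_succ_div_sq_of_div_log_le h).div_const 2)).neg
    rw [zero_div, add_zero, neg_zero] at this
    exact this.congr fun n => by ring
  simpa using (tendsto_natCast_div_add_atTop (1 : ℝ)).mul
    (((Real.continuous_exp.tendsto 0).comp herr).sub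
      (tendsto_pow_atTop_nhds_zero_of_lt_one (by norm_num) (by norm_num : (1 / 3 : ℝ) < 1)))

end LogBound

theorem Emin_asymp_lam_mid_large (lam : ℕ → ℝ)
    (h : ∀ᶠ n : ℕ in atTop, (n : ℝ) / Real.log n ≤ lam n ∧ lam n ≤ n * Real.log n) :
    Tendsto (fun n : ℕ => Emin n (lam n) /
      ((lam n / n) * (Real.sqrt (n / lam n) *
        (∫ t in (0:ℝ)..Real.sqrt (n / lam n), Real.exp (-t^2/2))
        + Real.exp (-(n / (2 * lam n))))))
      atTop (nhds 1) := by
  have hlow : ∀ᶠ n : ℕ in atTop, (n : ℝ) / Real.log n ≤ lam n := h.mono fun _ hn => hn.1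
  have hupper : Tendsto (fun n : ℕ => 1 + (1 / 3 : ℝ) ^ n) atTop (nhds 1) := by
    simpa using (tendsto_pow_atTop_nhds_zero_of_lt_one (by norm_num)
      (by norm_num : (1 / 3 : ℝ) < 1)).const_add 1
  refine tendsto_of_tendsto_of_tendsto_of_le_of_le' (tendsto_lower_factor_of_div_log_le hlow)
    hupper ?_ ?_ <;>
    filter_upwards [eventually_two_le_of_div_log_le hlow, eventually_ne_atTop 0] with n hlam hn <;>
    rw [EminApprox_eq hn (by linarith)]
  · rw [le_div_iff₀ (EminApprox_pos n (by linarith))]; exact le_Emin hn hlam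
  · rw [div_le_iff₀ (EminApprox_pos n (by linarith))]; exact Emin_le hn hlam
end

section
/- There exist a constant c > 0 and n₀ such that for all n ≥ n₀ and all λ ≥ 0, if X₁,…,X_n, Y₁,…,Y_n are 2n independent random variables uniform on [0,1], then n·E[min_{1≤i≤n}(X_i + λY_i)] ≥ c·max(1, √(λn)). -/
open MeasureTheory Filter

/-!
Markov's inequality at a level `T ≥ 0` and a union bound give
`E[min Zᵢ] ≥ T · P(min Zᵢ ≥ T) ≥ T · (1 - n · P(Z₁ < T))`, where `Zᵢ = Xᵢ + λ Yᵢ`.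
As `Z₁ < T` forces both `X₁ < T` and `λ Y₁ < T`, independence gives
`P(Z₁ < T) ≤ T · min 1 (T / λ)`. The level `T = 1 / (2n)` yields `n E ≥ 1/4`, and the level
`T = √(λn) / (2n)`, at which `n T² / λ = 1/4`, yields `n E ≥ 3 √(λn) / 8`.
-/

open ProbabilityTheory Set

instance inst_s14 : IsProbabilityMeasure unif01 :=
  ⟨by simp [unif01, Real.volume_Icc]⟩

instance inst_s14_2 (n : ℕ) : IsProbabilityMeasure (pairMeasure n) := by
  unfold pairMeasure; infer_instance

lemma unif01_real_Iio_le {a : ℝ} (ha : 0 ≤ a) : unif01.real (Iio a) ≤ a := by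
  rw [unif01, measureReal_restrict_apply measurableSet_Iio]
  calc volume.real (Iio a ∩ Icc 0 1) ≤ volume.real (Ico 0 a) :=
        measureReal_mono (fun x ⟨hxa, hx0, _⟩ => ⟨hx0, hxa⟩) (by simp)
    _ = a := by simp [ha]

lemma unif01_real_mul_lt_le {lam : ℝ} (hlam : 0 < lam) {T : ℝ} (hT : 0 ≤ T) :
    unif01.real {y | lam * y < T} ≤ T / lam := by
  have hset : {y | lam * y < T} = Iio (T / lam) := by
    ext y
    rw [mem_Iio, lt_div_iff₀ hlam, mul_comm]
    rfl
  rw [hset]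
  exact unif01_real_Iio_le (by positivity)

lemma iIndepFun_pairMeasure (n : ℕ) :
    iIndepFun (fun j (x : Fin n × Bool → ℝ) => x j) (pairMeasure n) :=
  iIndepFun_pi (X := fun _ => id) fun _ => aemeasurable_id

lemma pairMeasure_preimage_eval (n : ℕ) (j : Fin n × Bool) {s : Set ℝ}
    (hs : MeasurableSet s) :
    pairMeasure n ((fun x => x j) ⁻¹' s) = unif01 s :=
  (measurePreserving_eval (fun _ => unif01) j).measure_preimage hs.nullMeasurableSet

lemma ae_pairMeasure_mem_Icc (n : ℕ) : ∀ᵐ x ∂pairMeasure n, ∀ j, x j ∈ Icc (0 : ℝ) 1 :=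
  ae_all_iff.2 fun j => (Measure.quasiMeasurePreserving_eval _ j).ae
    (ae_restrict_mem measurableSet_Icc)

lemma mul_one_sub_sum_le_integral_iInf {Ω ι : Type*} [MeasurableSpace Ω] [Fintype ι]
    [Nonempty ι] {μ : Measure Ω} [IsProbabilityMeasure μ] {f : ι → Ω → ℝ}
    (hf₀ : 0 ≤ᵐ[μ] fun x => ⨅ i, f i x) (hf : Integrable (fun x => ⨅ i, f i x) μ)
    {T : ℝ} (hT : 0 ≤ T) :
    T * (1 - ∑ i, μ.real {x | f i x < T}) ≤ ∫ x, ⨅ i, f i x ∂μ := by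
  set A := {x | T ≤ ⨅ i, f i x}
  have hcover : univ ⊆ A ∪ ⋃ i, {x | f i x < T} := fun x _ =>
    (le_or_gt T (⨅ i, f i x)).imp id fun h => mem_iUnion.2 (exists_lt_of_ciInf_lt h)
  have hA : 1 - ∑ i, μ.real {x | f i x < T} ≤ μ.real A := by
    have := calc 1 = μ.real univ := probReal_univ.symm
      _ ≤ μ.real (A ∪ ⋃ i, {x | f i x < T}) := measureReal_mono hcover
      _ ≤ μ.real A + μ.real (⋃ i, {x | f i x < T}) := measureReal_union_le _ _
      _ ≤ μ.real A + ∑ i, μ.real {x | f i x < T} := by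
        gcongr; exact measureReal_iUnion_fintype_le _
    linarith
  calc T * (1 - ∑ i, μ.real {x | f i x < T}) ≤ T * μ.real A := by gcongr
    _ ≤ ∫ x, ⨅ i, f i x ∂μ := mul_meas_ge_le_integral_of_nonneg hf₀ hf T

lemma pairMeasure_real_lt_le (n : ℕ) {lam : ℝ} (hlam : 0 ≤ lam) (i : Fin n) (T : ℝ) :
    (pairMeasure n).real {x | x (i, true) + lam * x (i, false) < T}
      ≤ unif01.real (Iio T) * unif01.real {y | lam * y < T} := by
  set t := {y : ℝ | lam * y < T}
  have ht : MeasurableSet t := measurableSet_lt (by fun_prop) (by fun_prop)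
  have hsub : {x | x (i, true) + lam * x (i, false) < T} ≤ᵐ[pairMeasure n]
      ((fun x => x (i, true)) ⁻¹' Iio T ∩ (fun x => x (i, false)) ⁻¹' t : Set _) := by
    filter_upwards [ae_pairMeasure_mem_Icc n] with x hx (hlt : _ < T)
    have := mul_nonneg hlam (hx (i, false)).1
    exact ⟨show x (i, true) < T by linarith,
      show lam * x (i, false) < T by linarith [(hx (i, true)).1]⟩
  have hindep := (iIndepFun_pairMeasure n).indepFun (i := (i, true)) (j := (i, false)) (by simp)
  rw [measureReal_def, measureReal_def, measureReal_def, ← ENNReal.toReal_mul,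
    ← pairMeasure_preimage_eval n _ measurableSet_Iio, ← pairMeasure_preimage_eval n _ ht,
    ← hindep.measure_inter_preimage_eq_mul _ _ measurableSet_Iio ht]
  exact ENNReal.toReal_mono (measure_ne_top _ _) (measure_mono_ae hsub)

lemma ae_iInf_pair_mem_Icc {n : ℕ} (hn : 0 < n) {lam : ℝ} (hlam : 0 ≤ lam) :
    ∀ᵐ x ∂pairMeasure n,
      ⨅ i : Fin n, (x (i, true) + lam * x (i, false)) ∈ Icc 0 (1 + lam) := by
  filter_upwards [ae_pairMeasure_mem_Icc n] with x hx
  have hZ : ∀ i, x (i, true) + lam * x (i, false) ∈ Icc 0 (1 + lam) := fun i => by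
    obtain ⟨hX₀, hX₁⟩ := hx (i, true)
    obtain ⟨hY₀, hY₁⟩ := hx (i, false)
    constructor <;> nlinarith
  have : Nonempty (Fin n) := ⟨⟨0, hn⟩⟩
  exact ⟨le_ciInf fun i => (hZ i).1,
    (ciInf_le (Finite.bddBelow_range _) ⟨0, hn⟩).trans (hZ _).2⟩

lemma mul_one_sub_le_Emin {n : ℕ} (hn : 0 < n) {lam : ℝ} (hlam : 0 ≤ lam) {T : ℝ}
    (hT : 0 ≤ T) :
    T * (1 - n * (unif01.real (Iio T) * unif01.real {y | lam * y < T})) ≤ Emin n lam := by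
  have : Nonempty (Fin n) := ⟨⟨0, hn⟩⟩
  have hbd := ae_iInf_pair_mem_Icc hn hlam
  have hint : Integrable (fun x => ⨅ i : Fin n, (x (i, true) + lam * x (i, false)))
      (pairMeasure n) := by
    refine .of_bound (Measurable.aestronglyMeasurable (by fun_prop)) (1 + lam) ?_
    filter_upwards [hbd] with x hx
    rw [Real.norm_of_nonneg hx.1]
    exact hx.2
  calc _ ≤ T * (1 - ∑ i : Fin n,
        (pairMeasure n).real {x | x (i, true) + lam * x (i, false) < T}) := by
        gcongr
        calc _ ≤ ∑ _i : Fin n, unif01.real (Iio T) * unif01.real {y | lam * y < T} :=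
              Finset.sum_le_sum fun i _ => pairMeasure_real_lt_le n hlam i T
          _ = _ := by simp
    _ ≤ Emin n lam := mul_one_sub_sum_le_integral_iInf (hbd.mono fun x hx => hx.1) hint hT

lemma one_div_four_le_mul_Emin {n : ℕ} (hn : 0 < n) {lam : ℝ} (hlam : 0 ≤ lam) :
    1 / 4 ≤ n * Emin n lam := by
  set T : ℝ := 1 / (2 * n)
  have hT : 0 < T := by positivity
  have hp : unif01.real (Iio T) * unif01.real {y | lam * y < T} ≤ T :=
    (mul_le_of_le_one_right measureReal_nonneg measureReal_le_one).trans
      (unif01_real_Iio_le hT.le)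
  have hnT : n * T = 1 / 2 := by simp only [T]; field_simp
  calc (1 : ℝ) / 4 = n * T * (1 - n * T) := by rw [hnT]; norm_num
    _ ≤ n * (T * (1 - n * (unif01.real (Iio T) * unif01.real {y | lam * y < T}))) := by
      rw [mul_assoc]; gcongr
    _ ≤ n * Emin n lam := by gcongr; exact mul_one_sub_le_Emin hn hlam hT.le

lemma sqrt_mul_div_four_le_mul_Emin {n : ℕ} (hn : 0 < n) {lam : ℝ} (hlam : 0 < lam) :
    √(lam * n) / 4 ≤ n * Emin n lam := by
  set s := √(lam * n)
  have hs : s ^ 2 = lam * n := Real.sq_sqrt (by positivity)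
  set T : ℝ := s / (2 * n)
  have hT : 0 ≤ T := by positivity
  have hp : n * (unif01.real (Iio T) * unif01.real {y | lam * y < T}) ≤ 1 / 4 :=
    calc _ ≤ n * (T * (T / lam)) := by
          gcongr
          exacts [unif01_real_Iio_le hT, unif01_real_mul_lt_le hlam hT]
      _ = 1 / 4 := by simp only [T]; field_simp; rw [hs]; ring
  calc s / 4 ≤ n * T * (1 - 1 / 4) := by
        simp only [T]; field_simp; linarith [Real.sqrt_nonneg (lam * n)]
    _ ≤ n * (T * (1 - n * (unif01.real (Iio T) * unif01.real {y | lam * y < T}))) := by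
      rw [mul_assoc]; gcongr
    _ ≤ n * Emin n lam := by gcongr; exact mul_one_sub_le_Emin hn hlam.le hT

theorem Emin_lower_bound :
    ∃ c : ℝ, 0 < c ∧ ∃ n₀ : ℕ, ∀ n : ℕ, n₀ ≤ n → ∀ lam : ℝ, 0 ≤ lam →
      c * max 1 (Real.sqrt (lam * n)) ≤ (n : ℝ) * Emin n lam := by
  refine ⟨1 / 4, by norm_num, 1, fun n hn lam hlam => ?_⟩
  have hsmall := one_div_four_le_mul_Emin hn hlam
  rw [mul_max_of_nonneg _ _ (by norm_num), mul_one]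
  refine max_le hsmall ?_
  rcases hlam.eq_or_lt with rfl | hlam
  · simpa using hsmall.trans' (by norm_num)
  · simpa [div_eq_inv_mul] using sqrt_mul_div_four_le_mul_Emin hn hlam
end

section
/- There is a universal constant K such that, if F : [n] → [n] is a uniformly random mapping, then the number of cycles of the functional digraph of F (that is, the number of distinct orbits of F restricted to its set of periodic points {x : F^k(x) = x for some k ≥ 1}) is at most K·log n with probability at least 1 − O(n^{−50}); i.e., there exist constants K, C and n₀ such that for all n ≥ n₀, P(number of cycles of F > K·log n) ≤ C·n^{−50}. -/
/-!
The union of any set of cycles of `f : α → α` is a set on which `f` restricts to a permutation,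
and distinct sets of cycles have distinct unions, so `2 ^ #cycles(f) ≤ #{s | BijOn f s s}`.
Summing over `f` and exchanging the sums, a set of size `m` is permuted by exactly
`m! n^(n-m)` maps and `choose n m * m! ≤ n^m`, so `E[2 ^ #cycles] ≤ n + 1`. Markov's inequality
at the threshold `2 ^ (K log n) = n^51`, i.e. `K = 51 / log 2`, bounds the probability of more
than `K log n` cycles by `(n + 1) / n^51 ≤ 2 n^(-50)`.
-/

/-- The number of cycles of the functional digraph of `F : [n] → [n]`, i.e. the number
of distinct orbits of `F` restricted to its set of periodic points. -/
noncomputable def numCycles (n : ℕ) (F : Fin n → Fin n) : ℕ :=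
  Set.ncard {O : Set (Fin n) | ∃ x : Fin n,
    (∃ k : ℕ, 1 ≤ k ∧ F^[k] x = x) ∧ O = {y : Fin n | ∃ m : ℕ, F^[m] x = y}}

open Function Set Finset
open scoped Nat

namespace Function

variable {α : Type*} {f : α → α} {x y : α}

def cycles (f : α → α) : Set (Set α) := (fun x => range (f^[·] x)) '' periodicPts f

theorem image_range_iterate (f : α → α) (x : α) :
    f '' range (f^[·] x) = range (f^[·] (f x)) := by
  rw [← range_comp]
  congr 1
  funext m
  exact (iterate_succ_apply' f m x).symm.trans (iterate_succ_apply f m x)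

theorem range_iterate_eq_of_mem (hx : x ∈ periodicPts f) (hy : y ∈ range (f^[·] x)) :
    range (f^[·] y) = range (f^[·] x) := by
  obtain ⟨m, rfl⟩ := hy
  have hy : f^[m] x ∈ periodicPts f := by
    obtain ⟨k, hk, hkx⟩ := mem_periodicPts.1 hx
    exact mk_mem_periodicPts hk (hkx.apply_iterate m)
  ext z
  simp only [Set.mem_range]
  rw [← mem_periodicOrbit_iff hy, ← mem_periodicOrbit_iff hx, periodicOrbit_apply_iterate_eq hx]

theorem image_eq_self_of_mem_cycles {O : Set α} (hO : O ∈ cycles f) : f '' O = O := by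
  obtain ⟨x, hx, rfl⟩ := hO
  exact (image_range_iterate f x).trans (range_iterate_eq_of_mem hx ⟨1, rfl⟩)

theorem nonempty_of_mem_cycles {O : Set α} (hO : O ∈ cycles f) : O.Nonempty := by
  obtain ⟨x, -, rfl⟩ := hO
  exact range_nonempty _

theorem pairwise_disjoint_cycles : Pairwise (Disjoint on ((↑) : cycles f → Set α)) := by
  rintro ⟨_, x, hx, rfl⟩ ⟨_, x', hx', rfl⟩ hne
  refine Set.disjoint_left.2 fun z hz hz' => hne (Subtype.ext ?_)
  exact (range_iterate_eq_of_mem hx hz).symm.trans (range_iterate_eq_of_mem hx' hz')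

end Function

section BijOn

variable {α : Type*} {f : α → α} {s : Set α}

theorem Set.Finite.bijOn_of_image_eq_self (hs : s.Finite) (h : f '' s = s) : BijOn f s s :=
  (hs.surjOn_iff_bijOn_of_mapsTo (mapsTo_iff_image_subset.2 h.subset)).1 h.superset

theorem bijOn_self_iff_exists_perm :
    BijOn f s s ↔ ∃ σ : Equiv.Perm s, ∀ x : s, f x = σ x := by
  refine ⟨fun h => ⟨h.equiv, fun x => rfl⟩, fun ⟨σ, hσ⟩ => ?_⟩
  refine ⟨fun x hx => hσ ⟨x, hx⟩ ▸ (σ _).2, fun x hx y hy hxy => ?_, fun y hy => ?_⟩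
  · exact congrArg Subtype.val
      (σ.injective (Subtype.ext ((hσ ⟨x, hx⟩).symm.trans (hxy.trans (hσ ⟨y, hy⟩)))))
  · obtain ⟨x, hx⟩ := σ.surjective ⟨y, hy⟩
    exact ⟨x, x.2, (hσ x).trans (congrArg Subtype.val hx)⟩

end BijOn

theorem Nat.choose_mul_factorial_mul_pow_le {n m : ℕ} (hm : m ≤ n) :
    n.choose m * (m ! * n ^ (n - m)) ≤ n ^ n := by
  calc n.choose m * (m ! * n ^ (n - m)) = n.descFactorial m * n ^ (n - m) := by
        rw [Nat.descFactorial_eq_factorial_mul_choose]; ring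
    _ ≤ n ^ m * n ^ (n - m) := Nat.mul_le_mul_right _ (Nat.descFactorial_le_pow n m)
    _ = n ^ n := by rw [← pow_add, Nat.add_sub_cancel' hm]

section Fintype

variable {α : Type*} [Fintype α] [DecidableEq α]

theorem two_pow_ncard_cycles_le (f : α → α) :
    2 ^ (cycles f).ncard ≤ #{s : Finset α | BijOn f s s} := by
  classical
  let U : Finset (cycles f) → Finset α :=
    fun S => (⋃ O ∈ (S : Set (cycles f)), (O : Set α)).toFinset
  have hU : Injective U := fun S T h => by
    simpa using (pairwise_disjoint_cycles.biUnion_injective fun O => nonempty_of_mem_cycles O.2)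
      (Set.toFinset_inj.1 h)
  calc 2 ^ (cycles f).ncard = #(univ : Finset (Finset (cycles f))) := by
        rw [card_univ, Fintype.card_finset, ← Nat.card_eq_fintype_card, Nat.card_coe_set_eq]
    _ ≤ #{s : Finset α | BijOn f s s} := by
      refine card_le_card_of_injOn U (fun S _ => mem_filter.2 ⟨mem_univ _, ?_⟩) hU.injOn
      refine (Set.toFinite _).bijOn_of_image_eq_self ?_
      rw [Set.coe_toFinset, image_iUnion₂]
      exact iUnion₂_congr fun O _ => image_eq_self_of_mem_cycles O.2

theorem card_bijOn_self (s : Finset α) :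
    #{f : α → α | BijOn f s s} = (#s)! * Fintype.card α ^ (Fintype.card α - #s) := by
  let e := Equiv.piEquivPiSubtypeProd (· ∈ s) (fun _ => α)
  let glue : Equiv.Perm s × ({x // x ∉ s} → α) → (α → α) :=
    fun p => e.symm (fun x => p.1 x, p.2)
  have hglue : Injective glue := by
    intro p q h
    have := congrArg e h
    simp only [glue, Equiv.apply_symm_apply, Prod.mk.injEq] at this
    exact Prod.ext (Equiv.ext fun x => Subtype.ext (congrFun this.1 x)) this.2
  have hrange : {f : α → α | BijOn f s s} = range glue := by
    ext f
    simp only [Set.mem_ofPred_eq, bijOn_self_iff_exists_perm, Set.mem_range, glue, Prod.exists,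
      Equiv.symm_apply_eq, e, Equiv.piEquivPiSubtypeProd_apply, Prod.mk.injEq]
    exact exists_congr fun σ => ⟨fun h => ⟨_, funext fun x => (h x).symm, rfl⟩,
      fun ⟨_, h, _⟩ x => (congrFun h x).symm⟩
  calc #{f : α → α | BijOn f s s} = Fintype.card (range glue) := by
        rw [← Fintype.card_subtype]; exact Fintype.card_congr (Equiv.setCongr hrange)
    _ = Fintype.card (Equiv.Perm s × ({x // x ∉ s} → α)) := Set.card_range_of_injective hglue
    _ = _ := by
      rw [Fintype.card_prod, Fintype.card_perm, Fintype.card_fun, Fintype.card_subtype_compl,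
        Fintype.card_coe]

theorem sum_card_bijOn_self_le :
    ∑ s : Finset α, #{f : α → α | BijOn f s s}
      ≤ (Fintype.card α + 1) * Fintype.card α ^ Fintype.card α := by
  simp_rw [card_bijOn_self]
  set n := Fintype.card α
  rw [← Finset.powerset_univ, sum_powerset_apply_card (fun m => m ! * n ^ (n - m)), card_univ]
  calc ∑ m ∈ range (n + 1), n.choose m • (m ! * n ^ (n - m))
      ≤ ∑ _m ∈ range (n + 1), n ^ n := sum_le_sum fun m hm =>
        Nat.choose_mul_factorial_mul_pow_le (Nat.lt_succ_iff.1 (mem_range.1 hm))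
    _ = (n + 1) * n ^ n := by rw [sum_const, card_range, smul_eq_mul]

theorem sum_two_pow_ncard_cycles_le :
    ∑ f : α → α, 2 ^ (cycles f).ncard
      ≤ (Fintype.card α + 1) * Fintype.card α ^ Fintype.card α :=
  calc ∑ f : α → α, 2 ^ (cycles f).ncard
      ≤ ∑ f : α → α, #{s : Finset α | BijOn f s s} :=
        sum_le_sum fun f _ => two_pow_ncard_cycles_le f
    _ = ∑ s : Finset α, #{f : α → α | BijOn f s s} :=
        sum_card_bipartiteAbove_eq_sum_card_bipartiteBelow _
    _ ≤ _ := sum_card_bijOn_self_le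

end Fintype

theorem card_lt_mul_two_rpow_le_sum {ι : Type*} [Fintype ι] (g : ι → ℕ) (t : ℝ) :
    (#{i | t < g i} : ℝ) * 2 ^ t ≤ ∑ i, (2 : ℝ) ^ g i :=
  calc (#{i | t < g i} : ℝ) * 2 ^ t = ∑ i ∈ {i | t < g i}, (2 : ℝ) ^ t := by
        rw [sum_const, nsmul_eq_mul]
    _ ≤ ∑ i ∈ {i | t < g i}, (2 : ℝ) ^ g i := sum_le_sum fun i hi => by
        rw [← Real.rpow_natCast]
        exact Real.rpow_le_rpow_of_exponent_le one_le_two (mem_filter.1 hi).2.le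
    _ ≤ ∑ i, (2 : ℝ) ^ g i :=
        sum_le_sum_of_subset_of_nonneg (filter_subset _ _) fun _ _ _ => by positivity

theorem Real.rpow_div_log_mul_log {b x : ℝ} (a : ℝ) (hb : 0 < b) (hb1 : b ≠ 1) (hx : 0 < x) :
    b ^ (a / Real.log b * Real.log x) = x ^ a := by
  have : Real.log b ≠ 0 := Real.log_ne_zero_of_pos_of_ne_one hb hb1
  rw [Real.rpow_def_of_pos hb, Real.rpow_def_of_pos hx]
  field_simp

theorem numCycles_eq_ncard_cycles {n : ℕ} (F : Fin n → Fin n) :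
    numCycles n F = (cycles F).ncard := by
  unfold numCycles cycles
  congr 1
  exact Set.ext fun O => exists_congr fun x => and_congr Iff.rfl eq_comm

theorem sum_two_pow_numCycles_le (n : ℕ) :
    ∑ F : Fin n → Fin n, (2 : ℝ) ^ numCycles n F ≤ (n + 1) * n ^ n := by
  simp only [numCycles_eq_ncard_cycles]
  exact_mod_cast (Fintype.card_fin n ▸ sum_two_pow_ncard_cycles_le : _ ≤ (n + 1) * n ^ n)

/-- A uniformly random mapping `F : [n] → [n]` has at most `K log n` cycles with
probability at least `1 − O(n^{−50})`. -/
theorem random_mapping_few_cycles :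
    ∃ K C : ℝ, 0 < K ∧ 0 < C ∧ ∃ n₀ : ℕ, ∀ n : ℕ, n₀ ≤ n →
      (Nat.card {F : Fin n → Fin n // K * Real.log n < (numCycles n F : ℝ)} : ℝ)
          / (n : ℝ) ^ n
        ≤ C * (n : ℝ) ^ (-(50 : ℝ)) := by
  refine ⟨51 / Real.log 2, 2, by positivity, two_pos, 1, fun n hn => ?_⟩
  have hn1 : (1 : ℝ) ≤ n := by exact_mod_cast hn
  have hn0 : (0 : ℝ) < n := one_pos.trans_le hn1
  have hmarkov := (card_lt_mul_two_rpow_le_sum (numCycles n) (51 / Real.log 2 * Real.log n)).trans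
    (sum_two_pow_numCycles_le n)
  rw [Real.rpow_div_log_mul_log _ two_pos (by norm_num) hn0] at hmarkov
  rw [Nat.card_eq_fintype_card, Fintype.card_subtype, div_le_iff₀ (by positivity)]
  refine le_of_mul_le_mul_right ?_ (Real.rpow_pos_of_pos hn0 51)
  calc _ ≤ ((n : ℝ) + 1) * n ^ n := hmarkov
    _ ≤ 2 * n * n ^ n := by gcongr; linarith
    _ = 2 * (n : ℝ) ^ (-(50 : ℝ)) * n ^ n * n ^ (51 : ℝ) := by
      have h : (n : ℝ) ^ (-(50 : ℝ)) * n ^ (51 : ℝ) = n := by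
        rw [← Real.rpow_add hn0]; norm_num
      linear_combination (-2 * (n : ℝ) ^ n) * h
end
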